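/- Let X be a finite uniform d-dimensional simplicial complex and 0 ≤ p < 1, and let A be the transition operator of the p-lazy (d−1)-walk on Ω^{d−1}. Then every eigenvalue μ of A satisfies 2p−1 ≤ μ ≤ (p(d−1)+1)/d, and A f = ((p(d−1)+1)/d)·f for every closed (d−1)-form f ∈ Z^{d−1}. -/

import Mathlib

open scoped BigOperators Classical
open Filter Topology

noncomputable section

/-- A simplicial complex on a vertex set `V`: a family of finite subsets of `V`
(the cells) closed under taking nonempty subsets. -/
structure SComplex (V : Type*) where
  cells : Set (Finset V)
  down_closed : ∀ ⦃s t : Finset V⦄, s ∈ cells → t ⊆ s → t.Nonempty → t ∈ cells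

namespace SComplex

variable {V : Type*} (X : SComplex V)

/-- The tuple `σ` of `n` vertices spans an `(n-1)`-dimensional cell of `X`. -/
def IsCellT {n : ℕ} (σ : Fin n → V) : Prop :=
  Function.Injective σ ∧ Finset.image σ Finset.univ ∈ X.cells

/-- The degree of a cell `s`: the number of cells with one more vertex containing it. -/
def degS (s : Finset V) : ℕ :=
  Set.ncard {t : Finset V | t ∈ X.cells ∧ t.card = s.card + 1 ∧ s ⊆ t}

/-- Degree of the cell spanned by a tuple. -/
def degT {n : ℕ} (σ : Fin n → V) : ℕ :=
  X.degS (Finset.image σ Finset.univ)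

/-- An `(n-1)`-form: an alternating function on oriented `(n-1)`-cells, encoded as a
function on `n`-tuples of vertices which vanishes off the cells of `X` and is
antisymmetric under permutations. -/
def IsForm (n : ℕ) (f : (Fin n → V) → ℝ) : Prop :=
  (∀ σ, ¬ X.IsCellT σ → f σ = 0) ∧
  ∀ (σ : Fin n → V) (π : Equiv.Perm (Fin n)),
    f (σ ∘ π) = ((Equiv.Perm.sign π : ℤ) : ℝ) * f σ

/-- The Dirac form `𝟙_{σ₀}`: 1 at `σ₀`, -1 at the reversed orientation, 0 elsewhere. -/
def dirac {n : ℕ} (σ₀ : Fin n → V) : (Fin n → V) → ℝ := fun σ =>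
  if ∃ π : Equiv.Perm (Fin n), Equiv.Perm.sign π = 1 ∧ σ = σ₀ ∘ π then 1
  else if ∃ π : Equiv.Perm (Fin n), Equiv.Perm.sign π = -1 ∧ σ = σ₀ ∘ π then -1
  else 0

/-- The boundary operator: `(∂f)(σ) = Σ_{v : vσ ∈ X} f(vσ)`. -/
def bdry {n : ℕ} (f : (Fin (n + 1) → V) → ℝ) : (Fin n → V) → ℝ := fun σ =>
  ∑ᶠ v ∈ {v : V | X.IsCellT (Fin.cons v σ)}, f (Fin.cons v σ)

/-- The weighted sum of `f` over the neighbours of `σ`: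
`Σ_{σ' ∼ σ} f(σ')/deg σ' = Σ_{v ◁ σ} Σ_i (-1)^i f(v(σ∖σ_i))/deg(v(σ∖σ_i))`. -/
def nbrW {n : ℕ} (f : (Fin (n + 1) → V) → ℝ) : (Fin (n + 1) → V) → ℝ := fun σ =>
  ∑ᶠ v ∈ {v : V | X.IsCellT (Fin.cons v σ)},
    ∑ i : Fin (n + 1),
      (-1 : ℝ) ^ (i : ℕ) * f (Fin.cons v (σ ∘ i.succAbove)) /
        (X.degT (Fin.cons v (σ ∘ i.succAbove)) : ℝ)

/-- The unweighted sum of `f` over the neighbours of `σ`: `Σ_{σ' ∼ σ} f(σ')`. -/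
def nbrU {n : ℕ} (f : (Fin (n + 1) → V) → ℝ) : (Fin (n + 1) → V) → ℝ := fun σ =>
  ∑ᶠ v ∈ {v : V | X.IsCellT (Fin.cons v σ)},
    ∑ i : Fin (n + 1), (-1 : ℝ) ^ (i : ℕ) * f (Fin.cons v (σ ∘ i.succAbove))

/-- The upper Laplacian `(Δ⁺f)(σ) = f(σ) - Σ_{σ'∼σ} f(σ')/deg σ'`. -/
def lapUp {n : ℕ} (f : (Fin (n + 1) → V) → ℝ) : (Fin (n + 1) → V) → ℝ := fun σ =>
  f σ - X.nbrW f σ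

/-- The transition operator of the `p`-lazy walk:
`(Af)(σ) = p f(σ) + ((1-p)/d) Σ_{σ'∼σ} f(σ')/deg σ'`, where `d = n+1`. -/
def transOp {n : ℕ} (p : ℝ) (f : (Fin (n + 1) → V) → ℝ) : (Fin (n + 1) → V) → ℝ := fun σ =>
  p * f σ + ((1 - p) / ((n : ℝ) + 1)) * X.nbrW f σ

/-- The normalized expectation process `Ẽ_nn = (d/(p(d-1)+1))^nn • A^nn 𝟙_{σ₀}`. -/
def nexp {n : ℕ} (p : ℝ) (σ₀ : Fin (n + 1) → V) (nn : ℕ) : (Fin (n + 1) → V) → ℝ :=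
  (((n : ℝ) + 1) / (p * (n : ℝ) + 1)) ^ nn • (X.transOp p)^[nn] (SComplex.dirac σ₀)

/-- The weighted inner product `⟨f,g⟩ = Σ_{σ ∈ X^{n-1}} f(σ)g(σ)/deg σ`
(each unoriented cell is represented by `n!` tuples). -/
def innerW [Fintype V] {n : ℕ} (f g : (Fin n → V) → ℝ) : ℝ :=
  (1 / (n.factorial : ℝ)) * ∑ σ : Fin n → V, f σ * g σ / (X.degT σ : ℝ)

/-- The unweighted inner product `⟨f,g⟩ = Σ_{σ ∈ X^{n-1}} f(σ)g(σ)`. -/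
def innerU [Fintype V] {n : ℕ} (f g : (Fin n → V) → ℝ) : ℝ :=
  (1 / (n.factorial : ℝ)) * ∑ σ : Fin n → V, f σ * g σ

/-- The norm induced by the weighted inner product. -/
def normW [Fintype V] {n : ℕ} (f : (Fin n → V) → ℝ) : ℝ :=
  Real.sqrt (X.innerW f f)

/-- `f` is a closed `(d-1)`-form (`f ∈ Z^{d-1} = ker ∂_d^*`), characterized by
orthogonality to the image of `∂_d`. -/
def IsClosedForm [Fintype V] (m : ℕ) (f : (Fin (m + 2) → V) → ℝ) : Prop :=
  X.IsForm (m + 2) f ∧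
  ∀ g : (Fin (m + 3) → V) → ℝ, X.IsForm (m + 3) g → X.innerW f (X.bdry g) = 0

/-- `f` is an exact `(d-1)`-form (`f ∈ B^{d-1} = im ∂_{d-1}^*`): `f = ∂_{d-1}^* g` for a
`(d-2)`-form `g`, characterized by the adjoint identity. -/
def IsExactForm [Fintype V] (m : ℕ) (f : (Fin (m + 2) → V) → ℝ) : Prop :=
  X.IsForm (m + 2) f ∧
  ∃ g : (Fin (m + 1) → V) → ℝ, X.IsForm (m + 1) g ∧
    ∀ h : (Fin (m + 2) → V) → ℝ, X.IsForm (m + 2) h →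
      X.innerW f h = innerU g (X.bdry h)

/-- Two tuples span the same oriented cell. -/
def SameOr {n : ℕ} (σ σ' : Fin n → V) : Prop :=
  ∃ π : Equiv.Perm (Fin n), Equiv.Perm.sign π = 1 ∧ σ' = σ ∘ π

/-- The neighbour relation on oriented `(d-1)`-cells: `σ ∼ σ'` iff there is an oriented
`d`-cell of which both `σ` and the reversal of `σ'` are faces with the induced
orientation; equivalently `σ' = (-1)^i v(σ∖σ_i)` for some `v ◁ σ`. -/
def Nbr {n : ℕ} (σ σ' : Fin (n + 1) → V) : Prop :=
  ∃ (v : V) (i : Fin (n + 1)), X.IsCellT (Fin.cons v σ) ∧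
    (if Even (i : ℕ) then SameOr σ' (Fin.cons v (σ ∘ i.succAbove))
     else SameOr σ' (Fin.cons v (σ ∘ i.succAbove) ∘ Equiv.swap 0 1))

/-- `σ` is a face of the oriented cell `τ` with the orientation induced by `τ`. -/
def IsInducedFace {n : ℕ} (σ : Fin (n + 1) → V) (τ : Fin (n + 2) → V) : Prop :=
  ∃ i : Fin (n + 2), if Even (i : ℕ) then SameOr σ (τ ∘ i.succAbove)
    else SameOr σ (τ ∘ i.succAbove ∘ Equiv.swap 0 1)

/-- The family `𝒯` of `d`-cells (`d = m+2`) admits a disorientation: a choice of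
orientation for each cell of `𝒯` such that any two of them sharing a
codimension-one face induce the same orientation on it. -/
def HasDisorientation (m : ℕ) (𝒯 : Set (Finset V)) : Prop :=
  ∃ c : Finset V → (Fin (m + 3) → V),
    (∀ t ∈ 𝒯, Function.Injective (c t) ∧ Finset.image (c t) Finset.univ = t) ∧
    ∀ t ∈ 𝒯, ∀ t' ∈ 𝒯, t ≠ t' → (t ∩ t').card = m + 2 →
      ∃ σ : Fin (m + 2) → V, Function.Injective σ ∧
        Finset.image σ Finset.univ = t ∩ t' ∧
        IsInducedFace σ (c t) ∧ IsInducedFace σ (c t')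

/-- `X` (of dimension `d`) has no simple `d`-loops: no non-backtracking closed chain
of `d`-cells in which consecutive cells share a `(d-1)`-cell. -/
def NoSimpleLoops (d : ℕ) : Prop :=
  ∀ (n : ℕ) (τ : ℕ → Finset V), 2 ≤ n → (∀ i, τ (i + n) = τ i) →
    (∀ i, τ i ∈ X.cells ∧ (τ i).card = d + 1) →
    (∀ i, (τ i ∩ τ (i + 1)) ∈ X.cells ∧ (τ i ∩ τ (i + 1)).card = d) →
    (∀ i, τ i ≠ τ (i + 2)) → False

end SComplex

open SComplex

/-!
Let `∂*` be the adjoint of the boundary map `∂` for the weighted inner product on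
`(d-1)`-forms and the unweighted one on `d`-forms; explicitly
`(∂*f)(τ) = Σᵢ (-1)ⁱ f(τ∖τᵢ)/deg(τ∖τᵢ)` on `d`-cells. When every `(d-1)`-cell has positive
degree, `∂∂*` is the upper Laplacian `Δ⁺`, and `A = ((p(d-1)+1)/d) I - ((1-p)/d) Δ⁺`.
Hence `⟨f, Δ⁺f⟩ = ‖∂*f‖² ≥ 0`, while Cauchy–Schwarz over the `d+1` faces of a cell gives
`‖∂*f‖² ≤ (d+1)‖f‖²`; these two bounds on the Rayleigh quotient of `Δ⁺` are the two bounds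
on `μ`. For a closed `f`, `‖∂*f‖² = ⟨f, ∂(∂*f)⟩ = 0`, so `Δ⁺f = 0`.
-/

section AlternatingFaceSum

open Equiv

variable {α : Type*} {n : ℕ}

theorem sum_comp_perm [Fintype α] {k : ℕ} (π : Perm (Fin k))
    (Φ : (Fin k → α) → ℝ) : ∑ τ : Fin k → α, Φ (τ ∘ π) = ∑ τ, Φ τ :=
  Equiv.sum_comp (Equiv.arrowCongr π.symm (Equiv.refl α)) Φ

def alternatingFaceSum (F : (Fin n → α) → ℝ) (τ : Fin (n + 1) → α) : ℝ :=
  ∑ i : Fin (n + 1), (-1 : ℝ) ^ (i : ℕ) * F (τ ∘ i.succAbove)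

theorem comp_cycleRange_comp_succAbove (τ : Fin (n + 1) → α) (i : Fin (n + 1)) :
    (τ ∘ Fin.cycleRange i) ∘ i.succAbove = τ ∘ Fin.succ := by
  ext j; simp

-- `decomposeFin.symm (0, e)` is `e` acting on `1, …, n` and fixing `0`.
theorem bijective_cycleRange_inv_mul_decomposeFin :
    Function.Bijective fun q : Fin (n + 1) × Perm (Fin n) =>
      (Fin.cycleRange q.1)⁻¹ * Perm.decomposeFin.symm (0, q.2) := by
  rw [Fintype.bijective_iff_injective_and_card]
  refine ⟨fun ⟨i, e⟩ ⟨j, e'⟩ h => ?_, by simp [Fintype.card_perm, Nat.factorial_succ]⟩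
  obtain rfl : i = j := by simpa using congrArg (· 0) h
  simpa using Perm.decomposeFin.symm.injective (mul_left_cancel h)

theorem sum_perm_sign_mul_comp_succ (F : (Fin n → α) → ℝ)
    (hF : ∀ σ (π : Perm (Fin n)), F (σ ∘ π) = ((Perm.sign π : ℤ) : ℝ) * F σ)
    (τ : Fin (n + 1) → α) :
    ∑ π : Perm (Fin (n + 1)), ((Perm.sign π : ℤ) : ℝ) * F (τ ∘ π ∘ Fin.succ)
      = n.factorial * alternatingFaceSum F τ := by
  rw [← Fintype.sum_bijective _ bijective_cycleRange_inv_mul_decomposeFin _ _ fun _ => rfl,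
    Fintype.sum_prod_type, alternatingFaceSum, Finset.mul_sum]
  refine Finset.sum_congr rfl fun i _ => ?_
  have hterm : ∀ e : Perm (Fin n),
      ((Perm.sign ((Fin.cycleRange i)⁻¹ * Perm.decomposeFin.symm (0, e)) : ℤ) : ℝ) *
        F (τ ∘ ⇑((Fin.cycleRange i)⁻¹ * Perm.decomposeFin.symm (0, e)) ∘ Fin.succ)
        = (-1 : ℝ) ^ (i : ℕ) * F (τ ∘ i.succAbove) := by
    intro e
    have hcomp : τ ∘ ⇑((Fin.cycleRange i)⁻¹ * Perm.decomposeFin.symm (0, e)) ∘ Fin.succ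
        = (τ ∘ i.succAbove) ∘ e := by
      ext j; simp [Perm.inv_def]
    rw [hcomp, hF, map_mul, Perm.decomposeFin.symm_sign, map_inv, Fin.sign_cycleRange]
    rcases Int.units_eq_one_or (Perm.sign e) with he | he <;> simp [he]
  simp only [hterm, Finset.sum_const, Finset.card_univ, Fintype.card_perm, Fintype.card_fin,
    nsmul_eq_mul]

theorem alternatingFaceSum_comp_perm (F : (Fin n → α) → ℝ)
    (hF : ∀ σ (π : Perm (Fin n)), F (σ ∘ π) = ((Perm.sign π : ℤ) : ℝ) * F σ)
    (τ : Fin (n + 1) → α) (π : Perm (Fin (n + 1))) :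
    alternatingFaceSum F (τ ∘ π) = ((Perm.sign π : ℤ) : ℝ) * alternatingFaceSum F τ := by
  have hfac : (n.factorial : ℝ) ≠ 0 := by positivity
  refine mul_left_cancel₀ hfac ?_
  rw [mul_left_comm, ← sum_perm_sign_mul_comp_succ F hF, ← sum_perm_sign_mul_comp_succ F hF,
    Finset.mul_sum, ← (Group.mulLeft_bijective π⁻¹).sum_comp]
  refine Finset.sum_congr rfl fun ρ _ => ?_
  have hcomp : (τ ∘ π) ∘ ⇑(π⁻¹ * ρ) ∘ Fin.succ = τ ∘ ρ ∘ Fin.succ := by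
    ext j; simp [Perm.inv_def]
  rw [hcomp, map_mul, map_inv, Units.val_mul, Int.cast_mul, ← mul_assoc]
  rcases Int.units_eq_one_or (Perm.sign π) with h | h <;> simp [h]

end AlternatingFaceSum

namespace SComplex

open Equiv

variable {V : Type*} (X : SComplex V) {n : ℕ}

theorem image_comp_perm (σ : Fin n → V) (π : Perm (Fin n)) :
    Finset.image (σ ∘ π) Finset.univ = Finset.image σ Finset.univ := by
  rw [← Finset.image_image, Finset.image_univ_equiv]

theorem image_cons (v : V) (σ : Fin n → V) :
    Finset.image (Fin.cons v σ : Fin (n + 1) → V) Finset.univ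
      = insert v (Finset.image σ Finset.univ) := by
  ext; simp [Fin.exists_fin_succ, eq_comm]

theorem isCellT_comp_perm_iff (σ : Fin n → V) (π : Perm (Fin n)) :
    X.IsCellT (σ ∘ π) ↔ X.IsCellT σ := by
  simp [IsCellT, image_comp_perm, Function.Injective.of_comp_iff' σ π.bijective]

theorem degT_comp_perm (σ : Fin n → V) (π : Perm (Fin n)) : X.degT (σ ∘ π) = X.degT σ := by
  rw [degT, image_comp_perm, degT]

theorem IsCellT.of_cons {v : V} {σ : Fin (n + 1) → V} (h : X.IsCellT (Fin.cons v σ)) :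
    X.IsCellT σ := by
  obtain ⟨hinj, hmem⟩ := h
  refine ⟨(Fin.cons_injective_iff.1 hinj).2, X.down_closed hmem ?_ ?_⟩
  · rw [image_cons]; exact Finset.subset_insert _ _
  · exact ⟨σ 0, Finset.mem_image_of_mem σ (Finset.mem_univ 0)⟩

def bdryAdj (f : (Fin (n + 1) → V) → ℝ) (τ : Fin (n + 2) → V) : ℝ :=
  if X.IsCellT τ then alternatingFaceSum (fun σ => f σ / X.degT σ) τ else 0

variable {X} in
theorem IsForm.div_degT_comp_perm {f : (Fin n → V) → ℝ} (hf : X.IsForm n f)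
    (σ : Fin n → V) (π : Perm (Fin n)) :
    f (σ ∘ π) / X.degT (σ ∘ π) = ((Perm.sign π : ℤ) : ℝ) * (f σ / X.degT σ) := by
  rw [hf.2, X.degT_comp_perm, mul_div_assoc]

variable {X} in
theorem IsForm.bdryAdj {f : (Fin (n + 1) → V) → ℝ} (hf : X.IsForm (n + 1) f) :
    X.IsForm (n + 2) (X.bdryAdj f) := by
  refine ⟨fun τ hτ => if_neg hτ, fun τ π => ?_⟩
  simp only [SComplex.bdryAdj, X.isCellT_comp_perm_iff,
    alternatingFaceSum_comp_perm (fun σ => f σ / X.degT σ) hf.div_degT_comp_perm]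
  split_ifs <;> simp

theorem bdryAdj_cons (f : (Fin (n + 1) → V) → ℝ) {v : V} {σ : Fin (n + 1) → V}
    (h : X.IsCellT (Fin.cons v σ)) :
    X.bdryAdj f (Fin.cons v σ) = f σ / X.degT σ - ∑ i : Fin (n + 1),
      (-1 : ℝ) ^ (i : ℕ) * f (Fin.cons v (σ ∘ i.succAbove)) /
        X.degT (Fin.cons v (σ ∘ i.succAbove)) := by
  have hface : ∀ i : Fin (n + 1),
      (Fin.cons v σ : Fin (n + 2) → V) ∘ i.succ.succAbove = Fin.cons v (σ ∘ i.succAbove) := by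
    intro i; ext j; cases j using Fin.cases <;> simp [Fin.succ_succAbove_succ]
  rw [bdryAdj, if_pos h, alternatingFaceSum, Fin.sum_univ_succ, sub_eq_add_neg,
    ← Finset.sum_neg_distrib]
  simp only [Fin.val_zero, pow_zero, one_mul, Fin.succAbove_zero, hface, Fin.val_succ, pow_succ]
  exact congrArg₂ _ rfl (Finset.sum_congr rfl fun i _ => by ring)

theorem bdryAdj_mul (f : (Fin (n + 1) → V) → ℝ) (g : (Fin (n + 2) → V) → ℝ)
    (τ : Fin (n + 2) → V) :
    X.bdryAdj f τ * g τ = ∑ i : Fin (n + 2), (-1 : ℝ) ^ (i : ℕ) *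
      (if X.IsCellT τ then f (τ ∘ i.succAbove) / X.degT (τ ∘ i.succAbove) * g τ else 0) := by
  unfold bdryAdj alternatingFaceSum
  split_ifs <;> simp [Finset.sum_mul, mul_assoc]

variable {X} in
theorem transOp_eq_smul_sub_lapUp (p : ℝ) (f : (Fin (n + 1) → V) → ℝ) :
    X.transOp p f = ((p * n + 1) / (n + 1)) • f - ((1 - p) / (n + 1)) • X.lapUp f := by
  ext σ
  simp only [transOp, lapUp, Pi.sub_apply, Pi.smul_apply, smul_eq_mul]
  field_simp
  ring

variable [Fintype V]

theorem degT_pos {σ : Fin n → V} (hσ : X.IsCellT σ)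
    (hup : ∃ t ∈ X.cells, t.card = n + 1 ∧ Finset.image σ Finset.univ ⊆ t) :
    0 < X.degT σ := by
  obtain ⟨t, ht, htcard, hst⟩ := hup
  rw [degT, degS, Set.ncard_pos (Set.toFinite _)]
  refine ⟨t, ht, ?_, hst⟩
  rw [Finset.card_image_of_injective _ hσ.1, Finset.card_univ, Fintype.card_fin, htcard]

def coneVertices (σ : Fin n → V) : Finset V :=
  Finset.univ.filter fun v => X.IsCellT (Fin.cons v σ)

@[simp]
theorem mem_coneVertices {σ : Fin n → V} {v : V} :
    v ∈ X.coneVertices σ ↔ X.IsCellT (Fin.cons v σ) := by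
  simp [coneVertices]

theorem finsum_mem_isCellT_cons (σ : Fin n → V) (F : V → ℝ) :
    ∑ᶠ v ∈ {v : V | X.IsCellT (Fin.cons v σ)}, F v = ∑ v ∈ X.coneVertices σ, F v := by
  rw [← finsum_mem_coe_finset]
  congr 1
  ext v
  simp [coneVertices]

theorem card_coneVertices {σ : Fin n → V} (hσ : Function.Injective σ) :
    (X.coneVertices σ).card = X.degT σ := by
  set s := Finset.image σ Finset.univ with hs
  have hmem : ∀ v, v ∈ X.coneVertices σ ↔ v ∉ s ∧ insert v s ∈ X.cells := by
    intro v
    simp [coneVertices, IsCellT, Fin.cons_injective_iff, image_cons, hσ, s]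
  have hset : {t : Finset V | t ∈ X.cells ∧ t.card = s.card + 1 ∧ s ⊆ t}
      = (fun v => insert v s) '' (X.coneVertices σ : Set V) := by
    ext t
    simp only [Set.mem_ofPred_eq, Set.mem_image, Finset.mem_coe, hmem]
    constructor
    · rintro ⟨ht, hcard, hst⟩
      obtain ⟨v, hv, rfl⟩ := Finset.exists_eq_insert_iff.2 ⟨hst, hcard.symm⟩
      exact ⟨v, ⟨hv, ht⟩, rfl⟩
    · rintro ⟨v, ⟨hv, ht⟩, rfl⟩
      exact ⟨ht, Finset.card_insert_of_notMem hv, Finset.subset_insert _ _⟩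
  have hinj : Set.InjOn (fun v => insert v s) (X.coneVertices σ : Set V) :=
    fun v hv _ _ hvw => (Finset.insert_inj ((hmem v).1 hv).1).1 hvw
  rw [degT, degS, ← hs, hset, hinj.ncard_image, Set.ncard_coe_finset]

variable {X} in
theorem bdry_bdryAdj {f : (Fin (n + 1) → V) → ℝ} (hf : X.IsForm (n + 1) f)
    (hdeg : ∀ σ : Fin (n + 1) → V, X.IsCellT σ → 0 < X.degT σ) :
    X.bdry (X.bdryAdj f) = X.lapUp f := by
  ext σ
  rw [bdry, lapUp, nbrW, X.finsum_mem_isCellT_cons, X.finsum_mem_isCellT_cons]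
  rw [Finset.sum_congr rfl fun v (hv : v ∈ X.coneVertices σ) =>
    X.bdryAdj_cons f (X.mem_coneVertices.1 hv), Finset.sum_sub_distrib, Finset.sum_const]
  by_cases hσ : X.IsCellT σ
  · have hdegσ : (X.degT σ : ℝ) ≠ 0 := by exact_mod_cast (hdeg σ hσ).ne'
    rw [X.card_coneVertices hσ.1, nsmul_eq_mul, mul_div_cancel₀ _ hdegσ]
  · have hempty : X.coneVertices σ = ∅ :=
      Finset.filter_false_of_mem fun v _ h => hσ h.of_cons
    simp [hempty, hf.1 σ hσ]

theorem card_coneVertices_le (σ : Fin n → V) : (X.coneVertices σ).card ≤ X.degT σ := by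
  by_cases hσ : Function.Injective σ
  · exact (X.card_coneVertices hσ).le
  · have hempty : X.coneVertices σ = ∅ :=
      Finset.filter_false_of_mem fun v _ h => hσ (Fin.cons_injective_iff.1 h.1).2
    simp [hempty]

theorem sum_ite_isCellT_eq_sum_coneVertices (Φ : (Fin (n + 1) → V) → ℝ) :
    ∑ τ : Fin (n + 1) → V, (if X.IsCellT τ then Φ τ else 0)
      = ∑ σ : Fin n → V, ∑ v ∈ X.coneVertices σ, Φ (Fin.cons v σ) := by
  rw [← (Fin.consEquiv fun _ => V).sum_comp, Fintype.sum_prod_type, Finset.sum_comm]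
  simp only [coneVertices, Finset.sum_filter]
  rfl

theorem sum_ite_isCellT_comp_succAbove (i : Fin (n + 2))
    (Φ : (Fin (n + 1) → V) → (Fin (n + 2) → V) → ℝ) :
    ∑ τ : Fin (n + 2) → V, (if X.IsCellT τ then Φ (τ ∘ i.succAbove) τ else 0)
      = ∑ τ : Fin (n + 2) → V,
          (if X.IsCellT τ then Φ (τ ∘ Fin.succ) (τ ∘ Fin.cycleRange i) else 0) := by
  rw [← sum_comp_perm (Fin.cycleRange i)]
  simp only [isCellT_comp_perm_iff, comp_cycleRange_comp_succAbove]

theorem innerW_bdry (f : (Fin (n + 1) → V) → ℝ) (g : (Fin (n + 2) → V) → ℝ) :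
    X.innerW f (X.bdry g) = 1 / ((n + 1).factorial : ℝ) * ∑ τ : Fin (n + 2) → V,
      (if X.IsCellT τ then f (τ ∘ Fin.succ) / X.degT (τ ∘ Fin.succ) * g τ else 0) := by
  rw [innerW, sum_ite_isCellT_eq_sum_coneVertices]
  congr 1
  refine Finset.sum_congr rfl fun σ _ => ?_
  rw [bdry, finsum_mem_isCellT_cons, Finset.mul_sum, Finset.sum_div]
  exact Finset.sum_congr rfl fun v _ => by simp only [Fin.cons_comp_succ]; ring

theorem innerW_bdry_eq_innerU_bdryAdj (f : (Fin (n + 1) → V) → ℝ)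
    {g : (Fin (n + 2) → V) → ℝ} (hg : X.IsForm (n + 2) g) :
    X.innerW f (X.bdry g) = innerU (X.bdryAdj f) g := by
  have hface : ∀ i : Fin (n + 2), ∑ τ : Fin (n + 2) → V, (-1 : ℝ) ^ (i : ℕ) *
      (if X.IsCellT τ then f (τ ∘ i.succAbove) / X.degT (τ ∘ i.succAbove) * g τ else 0)
      = ∑ τ : Fin (n + 2) → V,
          (if X.IsCellT τ then f (τ ∘ Fin.succ) / X.degT (τ ∘ Fin.succ) * g τ else 0) := by
    intro i
    rw [← Finset.mul_sum, X.sum_ite_isCellT_comp_succAbove i (fun σ τ => f σ / X.degT σ * g τ),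
      Finset.mul_sum]
    refine Finset.sum_congr rfl fun τ _ => ?_
    rw [hg.2, Fin.sign_cycleRange]
    split_ifs
    · obtain h | h := neg_one_pow_eq_or ℝ (i : ℕ) <;> simp [h]
    · simp
  rw [innerW_bdry, innerU, Finset.sum_congr rfl fun τ _ => X.bdryAdj_mul f g τ,
    Finset.sum_comm, Finset.sum_congr rfl fun i _ => hface i, Finset.sum_const,
    Finset.card_univ, Fintype.card_fin, nsmul_eq_mul, Nat.factorial_succ (n + 1)]
  push_cast
  field_simp
  ring

theorem sum_ite_isCellT_sq_le (f : (Fin (n + 1) → V) → ℝ) :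
    ∑ τ : Fin (n + 2) → V,
        (if X.IsCellT τ then (f (τ ∘ Fin.succ) / X.degT (τ ∘ Fin.succ)) ^ 2 else 0)
      ≤ ∑ σ, f σ * f σ / X.degT σ := by
  rw [sum_ite_isCellT_eq_sum_coneVertices]
  refine Finset.sum_le_sum fun σ _ => ?_
  simp only [Fin.cons_comp_succ, Finset.sum_const, nsmul_eq_mul]
  calc ((X.coneVertices σ).card : ℝ) * (f σ / X.degT σ) ^ 2
      ≤ X.degT σ * (f σ / X.degT σ) ^ 2 :=
        mul_le_mul_of_nonneg_right (by exact_mod_cast X.card_coneVertices_le σ) (sq_nonneg _)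
    _ = f σ * f σ / X.degT σ := by
        rcases eq_or_ne (X.degT σ : ℝ) 0 with h | h
        · simp [h]
        · field_simp

theorem innerU_bdryAdj_self_le (f : (Fin (n + 1) → V) → ℝ) :
    innerU (X.bdryAdj f) (X.bdryAdj f) ≤ ((n : ℝ) + 2) * X.innerW f f := by
  set Φ : (Fin (n + 1) → V) → ℝ := fun σ => f σ / X.degT σ
  have hCS : ∀ τ : Fin (n + 2) → V, X.bdryAdj f τ * X.bdryAdj f τ
      ≤ ((n : ℝ) + 2) * ∑ i : Fin (n + 2),
          (if X.IsCellT τ then Φ (τ ∘ i.succAbove) ^ 2 else 0) := by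
    intro τ
    unfold bdryAdj alternatingFaceSum
    split_ifs
    · have h := sq_sum_le_card_mul_sum_sq (s := Finset.univ)
        (f := fun i : Fin (n + 2) => (-1 : ℝ) ^ (i : ℕ) * Φ (τ ∘ i.succAbove))
      simp only [Finset.card_univ, Fintype.card_fin, mul_pow, ← pow_mul,
        pow_mul', neg_one_sq, one_pow, one_mul] at h
      push_cast at h
      rw [← sq]
      exact h
    · simp
  have hface : ∀ i : Fin (n + 2),
      ∑ τ : Fin (n + 2) → V, (if X.IsCellT τ then Φ (τ ∘ i.succAbove) ^ 2 else 0)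
        = ∑ τ : Fin (n + 2) → V, (if X.IsCellT τ then Φ (τ ∘ Fin.succ) ^ 2 else 0) :=
    fun i => X.sum_ite_isCellT_comp_succAbove i fun σ _ => Φ σ ^ 2
  calc innerU (X.bdryAdj f) (X.bdryAdj f)
      ≤ 1 / ((n + 2).factorial : ℝ) * ∑ τ : Fin (n + 2) → V, ((n : ℝ) + 2) *
          ∑ i : Fin (n + 2), (if X.IsCellT τ then Φ (τ ∘ i.succAbove) ^ 2 else 0) := by
        rw [innerU]
        gcongr 1 / _ * ?_
        exact Finset.sum_le_sum fun τ _ => hCS τ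
    _ = 1 / ((n + 2).factorial : ℝ) * (((n : ℝ) + 2) * ∑ i : Fin (n + 2),
          ∑ τ : Fin (n + 2) → V, (if X.IsCellT τ then Φ (τ ∘ i.succAbove) ^ 2 else 0)) := by
        rw [← Finset.mul_sum, Finset.sum_comm]
    _ ≤ 1 / ((n + 2).factorial : ℝ) * (((n : ℝ) + 2) * ((n : ℝ) + 2) *
          ∑ σ, f σ * f σ / X.degT σ) := by
        simp only [hface, Finset.sum_const, Finset.card_univ, Fintype.card_fin, nsmul_eq_mul,
          ← mul_assoc]
        push_cast
        gcongr
        exact X.sum_ite_isCellT_sq_le f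
    _ = ((n : ℝ) + 2) * X.innerW f f := by
        rw [innerW, Nat.factorial_succ (n + 1)]
        push_cast
        field_simp
        ring

variable {X}

theorem innerW_sub_right (f g h : (Fin n → V) → ℝ) :
    X.innerW f (g - h) = X.innerW f g - X.innerW f h := by
  simp only [innerW, Pi.sub_apply, mul_sub, sub_div, Finset.sum_sub_distrib]

theorem innerW_smul_right (f g : (Fin n → V) → ℝ) (c : ℝ) :
    X.innerW f (c • g) = c * X.innerW f g := by
  simp only [innerW, Pi.smul_apply, smul_eq_mul, Finset.mul_sum]
  exact Finset.sum_congr rfl fun σ _ => by ring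

theorem innerW_self_pos {f : (Fin n → V) → ℝ} (hf : X.IsForm n f)
    (hdeg : ∀ σ : Fin n → V, X.IsCellT σ → 0 < X.degT σ) (hf0 : f ≠ 0) :
    0 < X.innerW f f := by
  obtain ⟨σ, hσ⟩ := Function.ne_iff.1 hf0
  have hcell : X.IsCellT σ := by_contra fun h => hσ (hf.1 σ h)
  have hterm : 0 < f σ * f σ / X.degT σ :=
    div_pos (mul_self_pos.2 hσ) (by exact_mod_cast hdeg σ hcell)
  refine mul_pos (by positivity) (Finset.sum_pos' (fun τ _ => ?_) ⟨σ, Finset.mem_univ σ, hterm⟩)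
  exact div_nonneg (mul_self_nonneg (f τ)) (Nat.cast_nonneg _)

theorem innerU_self_nonneg (g : (Fin n → V) → ℝ) : 0 ≤ innerU g g :=
  mul_nonneg (by positivity) (Finset.sum_nonneg fun σ _ => mul_self_nonneg (g σ))

theorem eq_zero_of_innerU_self_eq_zero {g : (Fin n → V) → ℝ} (h : innerU g g = 0) : g = 0 := by
  have hsum : ∑ σ, g σ * g σ = 0 := by
    simpa [innerU, Nat.factorial_ne_zero] using h
  ext σ
  exact mul_self_eq_zero.1 <|
    (Finset.sum_eq_zero_iff_of_nonneg fun σ _ => mul_self_nonneg (g σ)).1 hsum σ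
      (Finset.mem_univ σ)

theorem innerW_lapUp_self {f : (Fin (n + 1) → V) → ℝ} (hf : X.IsForm (n + 1) f)
    (hdeg : ∀ σ : Fin (n + 1) → V, X.IsCellT σ → 0 < X.degT σ) :
    X.innerW f (X.lapUp f) = innerU (X.bdryAdj f) (X.bdryAdj f) := by
  rw [← bdry_bdryAdj hf hdeg, innerW_bdry_eq_innerU_bdryAdj X f hf.bdryAdj]

theorem IsClosedForm.lapUp_eq_zero {m : ℕ} {f : (Fin (m + 2) → V) → ℝ}
    (hf : X.IsClosedForm m f) (hdeg : ∀ σ : Fin (m + 2) → V, X.IsCellT σ → 0 < X.degT σ) :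
    X.lapUp f = 0 := by
  have hadj : X.bdryAdj f = 0 := by
    apply eq_zero_of_innerU_self_eq_zero
    rw [← innerW_bdry_eq_innerU_bdryAdj X f hf.1.bdryAdj]
    exact hf.2 _ hf.1.bdryAdj
  rw [← bdry_bdryAdj hf.1 hdeg, hadj]
  ext σ
  simp [bdry]

theorem IsForm.transOp_eigenvalue_bounds {p μ : ℝ} {f : (Fin (n + 1) → V) → ℝ}
    (hf : X.IsForm (n + 1) f) (hdeg : ∀ σ : Fin (n + 1) → V, X.IsCellT σ → 0 < X.degT σ)
    (hf0 : f ≠ 0) (hp : p < 1) (heig : X.transOp p f = μ • f) :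
    2 * p - 1 ≤ μ ∧ μ ≤ (p * n + 1) / (n + 1) := by
  have hN := X.innerW_self_pos hf hdeg hf0
  have hc : 0 ≤ (1 - p) / ((n : ℝ) + 1) := div_nonneg (by linarith) (by positivity)
  have hμ : μ * X.innerW f f = (p * n + 1) / (n + 1) * X.innerW f f
      - (1 - p) / (n + 1) * innerU (X.bdryAdj f) (X.bdryAdj f) := by
    rw [← innerW_smul_right, ← heig, transOp_eq_smul_sub_lapUp, innerW_sub_right,
      innerW_smul_right, innerW_smul_right, innerW_lapUp_self hf hdeg]
  have hgap : (p * n + 1) / (n + 1) - (1 - p) / (n + 1) * ((n : ℝ) + 2) = 2 * p - 1 := by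
    field_simp
    ring
  constructor
  · refine le_of_mul_le_mul_right ?_ hN
    calc (2 * p - 1) * X.innerW f f
        = (p * n + 1) / (n + 1) * X.innerW f f
            - (1 - p) / (n + 1) * (((n : ℝ) + 2) * X.innerW f f) := by rw [← hgap]; ring
      _ ≤ μ * X.innerW f f := by
        rw [hμ]
        gcongr
        exact X.innerU_bdryAdj_self_le f
  · refine le_of_mul_le_mul_right ?_ hN
    rw [hμ]
    exact sub_le_self _ (mul_nonneg hc (innerU_self_nonneg _))

end SComplex

theorem stmt6_general {V : Type*} [Fintype V] (m : ℕ) (X : SComplex V)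
    (huni : ∀ s ∈ X.cells, ∃ t ∈ X.cells, t.card = m + 3 ∧ s ⊆ t)
    (p : ℝ) (hp₂ : p < 1) :
    (∀ (μ : ℝ) (f : (Fin (m + 2) → V) → ℝ), X.IsForm (m + 2) f → f ≠ 0 →
        X.transOp p f = μ • f →
        2 * p - 1 ≤ μ ∧ μ ≤ (p * ((m : ℝ) + 1) + 1) / ((m : ℝ) + 2)) ∧
      ∀ f, X.IsClosedForm m f →
        X.transOp p f = ((p * ((m : ℝ) + 1) + 1) / ((m : ℝ) + 2)) • f := by
  have hdeg : ∀ σ : Fin (m + 2) → V, X.IsCellT σ → 0 < X.degT σ := fun σ hσ =>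
    X.degT_pos hσ (huni _ hσ.2)
  have hcast : ((m + 1 : ℕ) : ℝ) + 1 = (m : ℝ) + 2 := by push_cast; ring
  refine ⟨fun μ f hf hf0 heig => ?_, fun f hf => ?_⟩
  · have h := hf.transOp_eigenvalue_bounds hdeg hf0 hp₂ heig
    rwa [hcast, Nat.cast_add_one] at h
  · rw [transOp_eq_smul_sub_lapUp, hf.lapUp_eq_zero hdeg, smul_zero, sub_zero, hcast,
      Nat.cast_add_one]

/-- For a finite uniform `d`-dimensional complex (`d = m+2`) and
`0 ≤ p < 1`, every eigenvalue `μ` of the transition operator `A` of the `p`-lazy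
`(d-1)`-walk satisfies `2p-1 ≤ μ ≤ (p(d-1)+1)/d`, and `A` acts as multiplication by
`(p(d-1)+1)/d` on the closed forms `Z^{d-1}`. -/
theorem stmt6 {V : Type*} [Fintype V] (m : ℕ) (X : SComplex V)
    (hdim : ∀ s ∈ X.cells, s.card ≤ m + 3)
    (huni : ∀ s ∈ X.cells, ∃ t ∈ X.cells, t.card = m + 3 ∧ s ⊆ t)
    (htop : ∃ s ∈ X.cells, s.card = m + 3)
    (p : ℝ) (hp₁ : 0 ≤ p) (hp₂ : p < 1) :
    (∀ (μ : ℝ) (f : (Fin (m + 2) → V) → ℝ), X.IsForm (m + 2) f → f ≠ 0 →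
        X.transOp p f = μ • f →
        2 * p - 1 ≤ μ ∧ μ ≤ (p * ((m : ℝ) + 1) + 1) / ((m : ℝ) + 2)) ∧
      ∀ f, X.IsClosedForm m f →
        X.transOp p f = ((p * ((m : ℝ) + 1) + 1) / ((m : ℝ) + 2)) • f :=
  stmt6_general m X huni p hp₂
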